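/- If Δ is a connected graph on vertex set [n] whose labeling is an interval order (i.e., for all a < b < c, if {a,c} is an edge then {a,b} is an edge), then the lexicographic order on the edges of Δ is a shelling order of Δ viewed as a 1-dimensional simplicial complex. -/

import Mathlib

open Finset

/-- A simplicial complex on vertex set `ℕ`, given as the finite family of all of its
faces, closed under taking subsets. -/
def IsComplex (Δ : Finset (Finset ℕ)) : Prop :=
  ∀ F ∈ Δ, ∀ G ⊆ F, G ∈ Δ

/-- `F` is a facet (maximal face) of `Δ`. -/
def IsFacet (Δ : Finset (Finset ℕ)) (F : Finset ℕ) : Prop :=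
  F ∈ Δ ∧ ∀ G ∈ Δ, F ⊆ G → F = G

/-- The finset of facets of `Δ`. -/
def facets (Δ : Finset (Finset ℕ)) : Finset (Finset ℕ) :=
  Δ.filter fun F => ∀ G ∈ Δ, F ⊆ G → F = G

/-- `Δ` is pure of dimension `d`: every facet has `d + 1` vertices. -/
def IsPure (d : ℕ) (Δ : Finset (Finset ℕ)) : Prop :=
  ∀ F, IsFacet Δ F → F.card = d + 1

/-- Dual graph of a pure `d`-dimensional complex: nodes are facets, two facets are
adjacent iff they share a face with `d` elements (a codimension-one face). -/
def dualGraph (d : ℕ) (Δ : Finset (Finset ℕ)) : SimpleGraph {F // F ∈ facets Δ} :=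
  SimpleGraph.fromRel fun F G => ((F : Finset ℕ) ∩ (G : Finset ℕ)).card = d

/-- `Δ` is strongly connected: its dual graph is connected. -/
def StronglyConnected (d : ℕ) (Δ : Finset (Finset ℕ)) : Prop :=
  (dualGraph d Δ).Connected

/-- The labeling of the vertices by `ℕ` is a unit interval order: whenever
`F = {v₀ < v₁ < ⋯ < v_d}` is a facet, every `(d+1)`-element subset of the integer
interval `{v₀, v₀+1, …, v_d}` is a facet. -/
def UnitIntervalOrder (d : ℕ) (Δ : Finset (Finset ℕ)) : Prop :=
  ∀ F, IsFacet Δ F → ∀ hF : F.Nonempty,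
    ∀ S ⊆ Finset.Icc (F.min' hF) (F.max' hF), S.card = d + 1 → IsFacet Δ S

/-- The increasing list of the vertices of a face. -/
def sortedList (F : Finset ℕ) : List ℕ := F.sort (· ≤ ·)

/-- Lexicographic order on faces, comparing the increasing lists of vertices. -/
def faceLexLt (F G : Finset ℕ) : Prop :=
  List.Lex (· < ·) (sortedList F) (sortedList G)

/-- `L` lists exactly the facets of `Δ`, in lexicographic order. -/
def LexFacetList (Δ : Finset (Finset ℕ)) (L : List (Finset ℕ)) : Prop :=
  L.Nodup ∧ L.toFinset = facets Δ ∧ L.Pairwise faceLexLt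

/-- `L` is a shelling order of the pure `d`-dimensional complex `Δ`: it lists the
facets of `Δ` so that for each `k`, the intersection of `⟨L[k+1]⟩` with
`⟨L[0], …, L[k]⟩` is pure of dimension `d - 1`, i.e. it is nonempty and each of
its faces is contained in a common `d`-element face of `L[k+1]` and some earlier
facet. -/
def IsShellingOrder (d : ℕ) (Δ : Finset (Finset ℕ)) (L : List (Finset ℕ)) : Prop :=
  L.Nodup ∧ L.toFinset = facets Δ ∧
  ∀ (k : ℕ) (hk : k + 1 < L.length),
    (∃ τ ⊆ L.get ⟨k + 1, hk⟩, τ.card = d ∧ ∃ G ∈ L.take (k + 1), τ ⊆ G) ∧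
    (∀ σ ⊆ L.get ⟨k + 1, hk⟩, (∃ G ∈ L.take (k + 1), σ ⊆ G) →
      ∃ τ, σ ⊆ τ ∧ τ ⊆ L.get ⟨k + 1, hk⟩ ∧ τ.card = d ∧ ∃ G ∈ L.take (k + 1), τ ⊆ G)

/-- `Δ` is shellable (as a pure `d`-dimensional complex). -/
def Shellable (d : ℕ) (Δ : Finset (Finset ℕ)) : Prop :=
  ∃ L, IsShellingOrder d Δ L

/-- The link of the vertex `v` in `Δ`. -/
def linkC (Δ : Finset (Finset ℕ)) (v : ℕ) : Finset (Finset ℕ) :=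
  Δ.filter fun E => v ∉ E ∧ insert v E ∈ Δ

/-- The deletion of the vertex `v` from `Δ`. -/
def delC (Δ : Finset (Finset ℕ)) (v : ℕ) : Finset (Finset ℕ) :=
  Δ.filter fun E => v ∉ E

/-- Vertex decomposability: `Δ` is a simplex (possibly the void/empty simplex `{∅}`),
or it has a shedding vertex `v` whose link and deletion are vertex decomposable and
such that every facet of the deletion is a facet of `Δ`. -/
inductive VertexDecomposable : Finset (Finset ℕ) → Prop
  | simplex (V : Finset ℕ) : VertexDecomposable V.powerset
  | shed (Δ : Finset (Finset ℕ)) (v : ℕ) :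
      VertexDecomposable (linkC Δ v) → VertexDecomposable (delC Δ v) →
      (∀ F, IsFacet (delC Δ v) F → IsFacet Δ F) → VertexDecomposable Δ

/-!
In a pure 1-dimensional complex an edge `{a, b}` (`a < b`) is a valid next step of a shelling
as soon as it meets some earlier edge in a vertex. If the first edge `{c, d}` has `c = a`, it
does. Otherwise `c < a`, and a path of edges from `{a, b}` to `{c, d}` must cross from vertices
`≥ a` to a vertex `< a`, i.e. contain an edge `{u, w}` with `u < a ≤ w`. The interval property
then gives the edge `{u, a}`, which is lexicographically before `{a, b}` and meets it in `a`.
-/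

lemma mem_facets_iff {Δ : Finset (Finset ℕ)} {F : Finset ℕ} : F ∈ facets Δ ↔ IsFacet Δ F :=
  Finset.mem_filter

lemma exists_isFacet_superset {Δ : Finset (Finset ℕ)} {F : Finset ℕ} (hF : F ∈ Δ) :
    ∃ G, IsFacet Δ G ∧ F ⊆ G := by
  have hne : (Δ.filter (F ⊆ ·)).Nonempty := ⟨F, by simp [hF]⟩
  obtain ⟨G, hG, hmax⟩ := Finset.exists_max_image (Δ.filter (F ⊆ ·)) Finset.card hne
  rw [Finset.mem_filter] at hG
  refine ⟨G, ⟨hG.1, fun H hH hGH => Finset.eq_of_subset_of_card_le hGH ?_⟩, hG.2⟩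
  exact hmax H (Finset.mem_filter.2 ⟨hH, hG.2.trans hGH⟩)

lemma IsPure.isFacet_of_card_eq {d : ℕ} {Δ : Finset (Finset ℕ)} (hP : IsPure d Δ)
    {F : Finset ℕ} (hF : F ∈ Δ) (hcard : F.card = d + 1) : IsFacet Δ F := by
  refine ⟨hF, fun G hG hFG => ?_⟩
  obtain ⟨K, hK, hGK⟩ := exists_isFacet_superset hG
  have hFK : F = K := Finset.eq_of_subset_of_card_le (hFG.trans hGK) (by rw [hP K hK, hcard])
  exact hFG.antisymm (hFK ▸ hGK)

lemma IsPure.exists_eq_pair {Δ : Finset (Finset ℕ)} (hP : IsPure 1 Δ) {F : Finset ℕ}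
    (hF : IsFacet Δ F) : ∃ a b : ℕ, a < b ∧ F = {a, b} := by
  obtain ⟨a, b, hab, rfl⟩ := Finset.card_eq_two.1 (hP F hF)
  rcases hab.lt_or_gt with h | h
  · exact ⟨a, b, h, rfl⟩
  · exact ⟨b, a, h, Finset.pair_comm a b⟩

lemma sortedList_pair {a b : ℕ} (h : a < b) : sortedList {a, b} = [a, b] := by
  refine List.Perm.eq_of_pairwise' (l₂ := [a, b]) (Finset.pairwise_sort _ _) (by simp [h.le]) ?_
  exact List.perm_of_nodup_nodup_toFinset_eq (Finset.sort_nodup _ _) (by simp [h.ne])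
    (by rw [sortedList, Finset.sort_toFinset]; simp)

lemma faceLexLt_pair_pair_iff {a b c d : ℕ} (hab : a < b) (hcd : c < d) :
    faceLexLt {c, d} {a, b} ↔ c < a ∨ c = a ∧ d < b := by
  rw [faceLexLt, sortedList_pair hab, sortedList_pair hcd]
  constructor
  · rintro (h | h)
    · exact Or.inl ‹_›
    · exact Or.inr ⟨rfl, (List.lex_singleton_iff _ _).1 ‹_›⟩
  · rintro (h | ⟨rfl, h⟩)
    · exact List.Lex.rel h
    · exact List.Lex.cons ((List.lex_singleton_iff _ _).2 h)

instance : Std.Asymm faceLexLt where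
  asymm _ _ h := asymm (r := List.Lex (· < ·)) h

theorem List.Pairwise.mem_take_iff {α : Type*} {R : α → α → Prop} [Std.Asymm R] {L : List α}
    (hL : L.Pairwise R) {k : ℕ} (hk : k < L.length) {x : α} :
    x ∈ L.take k ↔ x ∈ L ∧ R x L[k] := by
  rw [List.pairwise_iff_getElem] at hL
  constructor
  · intro hx
    obtain ⟨i, hi, rfl⟩ := List.mem_take_iff_getElem.1 hx
    exact ⟨List.getElem_mem _, hL i k _ hk (by omega)⟩
  · rintro ⟨hx, hxk⟩
    obtain ⟨j, hj, rfl⟩ := List.getElem_of_mem hx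
    refine List.mem_take_iff_getElem.2 ⟨j, ?_, rfl⟩
    rcases lt_trichotomy j k with hjk | rfl | hkj
    · omega
    · exact absurd hxk (irrefl _)
    · exact absurd (hL k j hk hj hkj) (asymm hxk)

lemma StronglyConnected.exists_isFacet_lt_le {d : ℕ} {Δ : Finset (Finset ℕ)} (hd : 0 < d)
    (hconn : StronglyConnected d Δ) {F G : Finset ℕ} (hF : IsFacet Δ F) (hG : IsFacet Δ G)
    {a : ℕ} (hFa : ∀ v ∈ F, a ≤ v) (hGa : ∃ v ∈ G, v < a) :
    ∃ H, IsFacet Δ H ∧ ∃ u ∈ H, ∃ w ∈ H, u < a ∧ a ≤ w := by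
  obtain ⟨p⟩ := hconn.preconnected ⟨F, mem_facets_iff.2 hF⟩ ⟨G, mem_facets_iff.2 hG⟩
  obtain ⟨e, -, hin, hout⟩ := p.exists_boundary_dart {H | ∀ v ∈ (H : Finset ℕ), a ≤ v} hFa
    (by simpa using hGa)
  have hshared : ((e.fst : Finset ℕ) ∩ e.snd).Nonempty := by
    have hadj := e.adj
    simp only [dualGraph, SimpleGraph.fromRel_adj, Finset.inter_comm (e.snd : Finset ℕ),
      or_self] at hadj
    exact Finset.card_pos.1 (by omega)
  obtain ⟨w, hw⟩ := hshared
  obtain ⟨u, hu, hua⟩ : ∃ u ∈ (e.snd : Finset ℕ), u < a := by simpa using hout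
  exact ⟨e.snd, mem_facets_iff.1 e.snd.2, u, hu, w, (Finset.mem_inter.1 hw).2, hua,
    hin w (Finset.mem_inter.1 hw).1⟩

lemma exists_isFacet_faceLexLt_inter_nonempty {Δ : Finset (Finset ℕ)} (hP : IsPure 1 Δ)
    (hconn : StronglyConnected 1 Δ)
    (hInt : ∀ a b c : ℕ, a < b → b < c → ({a, c} : Finset ℕ) ∈ Δ → ({a, b} : Finset ℕ) ∈ Δ)
    {e f : Finset ℕ} (he : IsFacet Δ e) (hf : IsFacet Δ f) (hfe : faceLexLt f e) :
    ∃ g, IsFacet Δ g ∧ faceLexLt g e ∧ (g ∩ e).Nonempty := by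
  obtain ⟨a, b, hab, rfl⟩ := hP.exists_eq_pair he
  obtain ⟨c, d, hcd, rfl⟩ := hP.exists_eq_pair hf
  rcases (faceLexLt_pair_pair_iff hab hcd).1 hfe with hca | ⟨rfl, -⟩
  · obtain ⟨H, hH, u, hu, w, hw, hua, haw⟩ := hconn.exists_isFacet_lt_le one_pos he hf (a := a)
      (by simp only [Finset.mem_insert, Finset.mem_singleton]; omega) ⟨c, by simp, hca⟩
    have huw : {u, w} = H := Finset.eq_of_subset_of_card_le
      (Finset.insert_subset hu (Finset.singleton_subset_iff.2 hw))
      (by rw [hP H hH, Finset.card_pair (by omega)])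
    have hua' : ({u, a} : Finset ℕ) ∈ Δ := by
      rcases haw.eq_or_lt with rfl | haw
      · exact huw ▸ hH.1
      · exact hInt u a w hua haw (huw ▸ hH.1)
    exact ⟨{u, a}, hP.isFacet_of_card_eq hua' (Finset.card_pair hua.ne),
      (faceLexLt_pair_pair_iff hab hua).2 (Or.inl hua), a, by simp⟩
  · exact ⟨{c, d}, hf, hfe, c, by simp⟩

lemma shelling_conditions_of_card_eq_two {e : Finset ℕ} (he : e.card = 2)
    {T : List (Finset ℕ)} (hmeet : ∃ G ∈ T, (G ∩ e).Nonempty) (hnot : ∀ G ∈ T, ¬ e ⊆ G) :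
    (∃ τ ⊆ e, τ.card = 1 ∧ ∃ G ∈ T, τ ⊆ G) ∧
    (∀ σ ⊆ e, (∃ G ∈ T, σ ⊆ G) →
      ∃ τ, σ ⊆ τ ∧ τ ⊆ e ∧ τ.card = 1 ∧ ∃ G ∈ T, τ ⊆ G) := by
  obtain ⟨G, hG, v, hv⟩ := hmeet
  rw [Finset.mem_inter] at hv
  have hvertex : ∃ τ ⊆ e, τ.card = 1 ∧ ∃ G ∈ T, τ ⊆ G :=
    ⟨{v}, Finset.singleton_subset_iff.2 hv.2, Finset.card_singleton v,
      G, hG, Finset.singleton_subset_iff.2 hv.1⟩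
  refine ⟨hvertex, fun σ hσe ⟨G', hG', hσG'⟩ => ?_⟩
  rcases σ.eq_empty_or_nonempty with rfl | hσ
  · obtain ⟨τ, hτe, hτ, hτG⟩ := hvertex
    exact ⟨τ, Finset.empty_subset τ, hτe, hτ, hτG⟩
  · have hσe' : σ ⊂ e := ssubset_of_subset_of_ne hσe (by rintro rfl; exact hnot G' hG' hσG')
    have := Finset.card_lt_card hσe'
    have := hσ.card_pos
    exact ⟨σ, subset_rfl, hσe, by omega, G', hG', hσG'⟩

theorem stmt1_general (Δ : Finset (Finset ℕ))
    (hP : IsPure 1 Δ) (hconn : StronglyConnected 1 Δ)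
    (hInt : ∀ a b c : ℕ, a < b → b < c → ({a, c} : Finset ℕ) ∈ Δ →
      ({a, b} : Finset ℕ) ∈ Δ)
    (L : List (Finset ℕ)) (hL : LexFacetList Δ L) :
    IsShellingOrder 1 Δ L := by
  obtain ⟨hnd, htf, hsort⟩ := hL
  have hmem (F : Finset ℕ) : F ∈ L ↔ IsFacet Δ F := by
    rw [← List.mem_toFinset, htf, mem_facets_iff]
  refine ⟨hnd, htf, fun k hk => ?_⟩
  have he : IsFacet Δ L[k + 1] := (hmem _).1 (List.getElem_mem hk)
  have hearlier (G : Finset ℕ) := hsort.mem_take_iff hk (x := G)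
  refine shelling_conditions_of_card_eq_two (hP _ he) ?_ ?_
  · have hfirst : faceLexLt L[0] L[k + 1] :=
      List.pairwise_iff_getElem.1 hsort 0 (k + 1) (by omega) hk (by omega)
    obtain ⟨g, hg, hge, hmeet⟩ := exists_isFacet_faceLexLt_inter_nonempty hP hconn hInt he
      ((hmem _).1 (List.getElem_mem _)) hfirst
    exact ⟨g, (hearlier g).2 ⟨(hmem g).2 hg, hge⟩, hmeet⟩
  · intro G hG heG
    obtain ⟨hGL, hGe⟩ := (hearlier G).1 hG
    have heG' : L[k + 1] = G :=
      Finset.eq_of_subset_of_card_le heG (by rw [hP _ ((hmem G).1 hGL), hP _ he])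
    exact irrefl _ (heG' ▸ hGe)

theorem stmt1 (n : ℕ) (Δ : Finset (Finset ℕ))
    (hC : IsComplex Δ) (hP : IsPure 1 Δ) (hconn : StronglyConnected 1 Δ)
    (hV : Δ.sup id ⊆ Finset.Icc 1 n)
    (hInt : ∀ a b c : ℕ, a < b → b < c → ({a, c} : Finset ℕ) ∈ Δ →
      ({a, b} : Finset ℕ) ∈ Δ)
    (L : List (Finset ℕ)) (hL : LexFacetList Δ L) :
    IsShellingOrder 1 Δ L :=
  stmt1_general Δ hP hconn hInt L hL
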